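/- arXiv:2312.02960 — 3 statements merged into one kernel-verified Lean document; each statement's English description precedes it below -/
import Mathlib

section
/- For every integer M ≥ 1 and all pairwise distinct complex numbers z_1, …, z_{2M}, the square of the signed sum over pair partitions equals the unsigned sum of squares: ( Σ_{p ∈ P_M} (−1)^{c(p)} Π_{i=1}^{M} (z_{a_i(p)} − z_{b_i(p)})^{−1} )² = Σ_{p ∈ P_M} Π_{i=1}^{M} (z_{a_i(p)} − z_{b_i(p)})^{−2}. -/
open scoped BigOperators

attribute [local instance] Classical.propDecidable

/-- `p` is a perfect matching (pair partition) of `Fin (2*M)`: the pairs are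
recorded as ordered pairs `(a, b)` with `a < b`, and every element of
`Fin (2*M)` belongs to exactly one pair. -/
def IsPerfectMatching (M : ℕ) (p : Finset (Fin (2*M) × Fin (2*M))) : Prop :=
  (∀ e ∈ p, e.1 < e.2) ∧ ∀ i : Fin (2*M), ∃! e, e ∈ p ∧ (i = e.1 ∨ i = e.2)

/-- The crossing number of a matching: the number of (ordered) pairs of pairs
`(a_i, b_i)`, `(a_j, b_j)` with `a_i < a_j < b_i < b_j`. -/
noncomputable def crossingNumber (M : ℕ) (p : Finset (Fin (2*M) × Fin (2*M))) : ℕ :=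
  ((p ×ˢ p).filter (fun q => q.1.1 < q.2.1 ∧ q.2.1 < q.1.2 ∧ q.1.2 < q.2.2)).card

/-!
Both sides are sums over the pair partitions of a finite linearly ordered set `V`: the left one is
the Pfaffian of the antisymmetric matrix `((z x - z y)⁻¹)`, the right one the hafnian of
`((z x - z y)⁻²)`. We prove `Pf_V ^ 2 = Hf_V` over any field by strong induction on `V`.
Expanding along the least element `i` of `V`, whose partner `k` ranges over `V \ {i}`, gives
`Pf_V = ∑ k, c k * (z i - z k)⁻¹` and `Hf_V = ∑ k, (z i - z k)⁻² * Hf_k`, where `c k = ± Pf_k`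
and `Pf_k`, `Hf_k` live on `V \ {i, k}`; by induction `c k ^ 2 = Hf_k`. Replacing `z i` by `z j`
for some `j ≠ i` makes two rows of the Pfaffian equal, so it vanishes (a sign-reversing involution
swaps the partners of `i` and `j`); in the expansion this says `∑ k, c k * (z j - z k)⁻¹ = 0`.
These residue conditions and partial fractions give
`(∑ k, c k * (w - z k)⁻¹) ^ 2 = ∑ k, (c k * (w - z k)⁻¹) ^ 2`, and `w = z i` is the claim.
-/

open Finset Function Equiv

/-- The hypothesis `hc` includes the term `k = j`, which vanishes because `0⁻¹ = 0`. -/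
theorem sq_sum_mul_inv_sub {ι K : Type*} [Field K] {s : Finset ι} {z : ι → K}
    (hz : Set.InjOn z s) {w : K} (hw : ∀ k ∈ s, w ≠ z k) (c : ι → K)
    (hc : ∀ j ∈ s, ∑ k ∈ s, c k * (z j - z k)⁻¹ = 0) :
    (∑ k ∈ s, c k * (w - z k)⁻¹) ^ 2 = ∑ k ∈ s, (c k * (w - z k)⁻¹) ^ 2 := by
  set x := fun k => (w - z k)⁻¹ with hx
  have hsplit : ∀ k ∈ s, ∀ l ∈ s,
      x k * x l = (z k - z l)⁻¹ * x k - (z k - z l)⁻¹ * x l + if k = l then x k ^ 2 else 0 := by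
    intro k hk l hl
    by_cases hkl : k = l
    · simp [hkl, sq]
    have hzkl : z k - z l ≠ 0 := sub_ne_zero.2 fun h => hkl (hz hk hl h)
    have hwk : w - z k ≠ 0 := sub_ne_zero.2 (hw k hk)
    have hwl : w - z l ≠ 0 := sub_ne_zero.2 (hw l hl)
    rw [if_neg hkl, hx]
    field_simp
    ring
  have hfirst : ∑ k ∈ s, ∑ l ∈ s, c k * c l * ((z k - z l)⁻¹ * x k) = 0 := by
    refine sum_eq_zero fun k hk => ?_
    calc ∑ l ∈ s, c k * c l * ((z k - z l)⁻¹ * x k)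
        = c k * x k * ∑ l ∈ s, c l * (z k - z l)⁻¹ := by
          rw [mul_sum]
          exact sum_congr rfl fun l _ => by ring
      _ = 0 := by rw [hc k hk, mul_zero]
  have hsecond : ∑ k ∈ s, ∑ l ∈ s, c k * c l * ((z k - z l)⁻¹ * x l) = 0 := by
    rw [sum_comm]
    refine sum_eq_zero fun l hl => ?_
    calc ∑ k ∈ s, c k * c l * ((z k - z l)⁻¹ * x l)
        = -(c l * x l) * ∑ k ∈ s, c k * (z l - z k)⁻¹ := by
          rw [mul_sum]
          exact sum_congr rfl fun k _ => by rw [← neg_sub, inv_neg]; ring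
      _ = 0 := by rw [hc l hl, mul_zero]
  calc (∑ k ∈ s, c k * x k) ^ 2 = ∑ k ∈ s, ∑ l ∈ s, c k * c l * (x k * x l) := by
        rw [sq, sum_mul_sum]
        exact sum_congr rfl fun k _ => sum_congr rfl fun l _ => by ring
    _ = ∑ k ∈ s, ∑ l ∈ s, c k * c l * ((z k - z l)⁻¹ * x k) -
          ∑ k ∈ s, ∑ l ∈ s, c k * c l * ((z k - z l)⁻¹ * x l) +
          ∑ k ∈ s, ∑ l ∈ s, (if k = l then c k * c l * x k ^ 2 else 0) := by
        simp only [← sum_sub_distrib, ← sum_add_distrib]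
        refine sum_congr rfl fun k hk => sum_congr rfl fun l hl => ?_
        rw [hsplit k hk l hl]
        split_ifs <;> ring
    _ = ∑ k ∈ s, (c k * x k) ^ 2 := by
        rw [hfirst, hsecond, sub_zero, zero_add]
        refine sum_congr rfl fun k hk => ?_
        rw [sum_ite_eq, if_pos hk]
        ring

theorem neg_one_pow_add_neg_one_pow {R : Type*} [Ring R] {m n : ℕ} (h : (m + n) % 2 = 1) :
    (-1 : R) ^ m + (-1) ^ n = 0 := by
  rw [neg_one_pow_eq_pow_mod_two m, neg_one_pow_eq_pow_mod_two n]
  have : m % 2 + n % 2 = 1 := by omega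
  rcases Nat.mod_two_eq_zero_or_one m with hm | hm <;>
    rcases Nat.mod_two_eq_zero_or_one n with hn | hn <;> simp_all

namespace PairPartition

variable {α : Type*} [LinearOrder α]

/-! ### Sorted pairs -/

def sortPair (x y : α) : α × α := (min x y, max x y)

section sortPair

variable {x y z : α}

theorem sortPair_of_lt (h : x < y) : sortPair x y = (x, y) := by
  simp [sortPair, h.le]

theorem sortPair_comm (x y : α) : sortPair x y = sortPair y x := by
  simp [sortPair, min_comm, max_comm]

theorem eq_or_eq_sortPair : z = (sortPair x y).1 ∨ z = (sortPair x y).2 ↔ z = x ∨ z = y := by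
  rcases le_total x y with h | h <;> simp [sortPair, h, or_comm]

theorem sortPair_fst_lt_snd (h : x ≠ y) : (sortPair x y).1 < (sortPair x y).2 :=
  min_lt_max.2 h

theorem ne_sortPair_of_ne (hx : z ≠ x) (hy : z ≠ y) :
    z ≠ (sortPair x y).1 ∧ z ≠ (sortPair x y).2 := by
  refine ⟨fun h => ?_, fun h => ?_⟩
  · rcases eq_or_eq_sortPair.1 (Or.inl h) with h | h <;> contradiction
  · rcases eq_or_eq_sortPair.1 (Or.inr h) with h | h <;> contradiction

theorem sortPair_map_sortPair (f : α → α) :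
    sortPair (f (sortPair x y).1) (f (sortPair x y).2) = sortPair (f x) (f y) := by
  rcases le_total x y with h | h <;> simp [sortPair, h, min_comm, max_comm]

theorem inv_sub_sortPair {K : Type*} [Field K] (u : α → K) (x y : α) :
    (u (sortPair x y).1 - u (sortPair x y).2)⁻¹ =
      (-1) ^ (if y < x then 1 else 0) * (u x - u y)⁻¹ := by
  rcases lt_or_ge y x with h | h
  · simp [sortPair, h.le, h, ← inv_neg]
  · simp [sortPair, h, not_lt.2 h]

end sortPair

noncomputable def permPairs (σ : Perm α) (p : Finset (α × α)) : Finset (α × α) :=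
  p.image fun e => sortPair (σ e.1) (σ e.2)

theorem permPairs_permPairs {σ : Perm α} (hσ : Involutive σ) {p : Finset (α × α)}
    (hp : ∀ e ∈ p, e.1 < e.2) : permPairs σ (permPairs σ p) = p := by
  rw [permPairs, permPairs, image_image]
  conv_rhs => rw [← image_id (s := p)]
  refine image_congr fun e he => ?_
  simp only [comp_apply, sortPair_map_sortPair, hσ _, id]
  exact sortPair_of_lt (hp e he)

/-! ### Pair partitions of a finite set -/

def IsPairPartition (V : Finset α) (p : Finset (α × α)) : Prop :=
  (∀ e ∈ p, e.1 < e.2 ∧ e.1 ∈ V ∧ e.2 ∈ V) ∧ ∀ i ∈ V, ∃! e, e ∈ p ∧ (i = e.1 ∨ i = e.2)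

noncomputable def pairPartitions (V : Finset α) : Finset (Finset (α × α)) :=
  {p ∈ (V ×ˢ V).powerset | IsPairPartition V p}

variable {V W : Finset α} {p q : Finset (α × α)}

theorem mem_pairPartitions : p ∈ pairPartitions V ↔ IsPairPartition V p := by
  rw [pairPartitions, mem_filter, mem_powerset, and_iff_right_iff_imp]
  exact fun hp e he => mem_product.2 (hp.1 e he).2

theorem pairPartitions_empty : pairPartitions (∅ : Finset α) = {∅} := by
  ext p
  simp only [mem_pairPartitions, IsPairPartition, mem_singleton, notMem_empty, and_false,
    imp_false, IsEmpty.forall_iff, implies_true, and_true, eq_empty_iff_forall_notMem]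

theorem lt_of_isLeast_of_mem_erase {i x : α} (hi : IsLeast (V : Set α) i) (hx : x ∈ V.erase i) :
    i < x :=
  lt_of_le_of_ne (hi.2 (mem_of_mem_erase hx)) (ne_of_mem_erase hx).symm

namespace IsPairPartition

theorem endpoint_mem (hp : IsPairPartition V p) {e : α × α} (he : e ∈ p) {x : α}
    (hx : x = e.1 ∨ x = e.2) : x ∈ V := by
  rcases hx with rfl | rfl
  exacts [(hp.1 e he).2.1, (hp.1 e he).2.2]

theorem notMem_of_fst_notMem (hp : IsPairPartition V p) {e : α × α} (he : e.1 ∉ V) : e ∉ p :=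
  fun h => he (hp.1 e h).2.1

theorem eq_of_mem (hp : IsPairPartition V p) {x : α} (hx : x ∈ V) {e f : α × α} (he : e ∈ p)
    (hf : f ∈ p) (hxe : x = e.1 ∨ x = e.2) (hxf : x = f.1 ∨ x = f.2) : e = f :=
  (hp.2 x hx).unique ⟨he, hxe⟩ ⟨hf, hxf⟩

theorem exists_sortPair_mem (hp : IsPairPartition V p) {x : α} (hx : x ∈ V) :
    ∃ y, sortPair x y ∈ p := by
  obtain ⟨e, ⟨he, rfl | rfl⟩, -⟩ := hp.2 x hx
  · exact ⟨e.2, by rwa [sortPair_of_lt (hp.1 e he).1]⟩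
  · exact ⟨e.1, by rwa [sortPair_comm, sortPair_of_lt (hp.1 e he).1]⟩

theorem mem_of_sortPair_mem (hp : IsPairPartition V p) {x y : α} (h : sortPair x y ∈ p) :
    x ∈ V ∧ y ∈ V ∧ x ≠ y :=
  ⟨hp.endpoint_mem h (eq_or_eq_sortPair.2 (Or.inl rfl)),
    hp.endpoint_mem h (eq_or_eq_sortPair.2 (Or.inr rfl)),
    fun hxy => by simpa [sortPair, hxy] using (hp.1 _ h).1⟩

theorem erase (hp : IsPairPartition V p) {e : α × α} (he : e ∈ p) :
    IsPairPartition ((V.erase e.1).erase e.2) (p.erase e) := by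
  refine ⟨fun f hf => ?_, fun x hx => ?_⟩
  · obtain ⟨hfe, hf⟩ := mem_erase.1 hf
    obtain ⟨hlt, h1, h2⟩ := hp.1 f hf
    have h : ∀ y, y = f.1 ∨ y = f.2 → y ≠ e.1 ∧ y ≠ e.2 := fun y hy =>
      ⟨fun h => hfe (hp.eq_of_mem (hp.endpoint_mem he (Or.inl h)) hf he hy (Or.inl h)),
        fun h => hfe (hp.eq_of_mem (hp.endpoint_mem he (Or.inr h)) hf he hy (Or.inr h))⟩
    simp only [mem_erase]
    exact ⟨hlt, ⟨(h _ (Or.inl rfl)).2, (h _ (Or.inl rfl)).1, h1⟩,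
      ⟨(h _ (Or.inr rfl)).2, (h _ (Or.inr rfl)).1, h2⟩⟩
  · simp only [mem_erase] at hx
    obtain ⟨f, ⟨hf, hxf⟩, huniq⟩ := hp.2 x hx.2.2
    refine ⟨f, ⟨mem_erase.2 ⟨?_, hf⟩, hxf⟩, fun g hg => huniq g ⟨mem_of_mem_erase hg.1, hg.2⟩⟩
    rintro rfl
    tauto

theorem insert_of_notMem (hq : IsPairPartition W q) {a b : α} (hab : a < b) (ha : a ∉ W)
    (hb : b ∉ W) : IsPairPartition (insert a (insert b W)) (insert (a, b) q) := by
  refine ⟨fun f hf => ?_, fun x hx => ?_⟩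
  · rcases mem_insert.1 hf with rfl | hf
    · simp [hab]
    · obtain ⟨hlt, h1, h2⟩ := hq.1 f hf
      simp [hlt, h1, h2]
  rcases mem_insert.1 hx with rfl | hx
  · refine ⟨(x, b), ⟨mem_insert_self _ _, Or.inl rfl⟩, fun f ⟨hf, hxf⟩ => ?_⟩
    rcases mem_insert.1 hf with rfl | hf
    · rfl
    · exact absurd (hq.endpoint_mem hf hxf) ha
  rcases mem_insert.1 hx with rfl | hx
  · refine ⟨(a, x), ⟨mem_insert_self _ _, Or.inr rfl⟩, fun f ⟨hf, hxf⟩ => ?_⟩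
    rcases mem_insert.1 hf with rfl | hf
    · rfl
    · exact absurd (hq.endpoint_mem hf hxf) hb
  obtain ⟨f, ⟨hf, hxf⟩, huniq⟩ := hq.2 x hx
  refine ⟨f, ⟨mem_insert_of_mem hf, hxf⟩, fun g ⟨hg, hxg⟩ => ?_⟩
  rcases mem_insert.1 hg with rfl | hg
  · rcases hxg with rfl | rfl <;> contradiction
  · exact huniq g ⟨hg, hxg⟩

theorem perm (hp : IsPairPartition V p) (σ : Perm α) (hσ : ∀ x, σ x ∈ V ↔ x ∈ V) :
    IsPairPartition V (permPairs σ p) := by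
  refine ⟨?_, fun x hx => ?_⟩
  · simp only [permPairs, mem_image, forall_exists_index, and_imp]
    rintro _ e he rfl
    have hmem : ∀ y, y = (sortPair (σ e.1) (σ e.2)).1 ∨ y = (sortPair (σ e.1) (σ e.2)).2 →
        y ∈ V := by
      intro y hy
      rcases eq_or_eq_sortPair.1 hy with rfl | rfl
      exacts [(hσ _).2 (hp.1 e he).2.1, (hσ _).2 (hp.1 e he).2.2]
    exact ⟨sortPair_fst_lt_snd (σ.injective.ne (hp.1 e he).1.ne), hmem _ (Or.inl rfl),
      hmem _ (Or.inr rfl)⟩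
  · obtain ⟨e, ⟨he, hxe⟩, huniq⟩ := hp.2 (σ.symm x) (by simpa [← hσ (σ.symm x)])
    refine ⟨_, ⟨mem_image_of_mem _ he, ?_⟩, ?_⟩
    · rwa [eq_or_eq_sortPair, ← σ.symm_apply_eq, ← σ.symm_apply_eq]
    · simp only [permPairs, mem_image]
      rintro _ ⟨⟨f, hf, rfl⟩, hxf⟩
      rw [eq_or_eq_sortPair, ← σ.symm_apply_eq, ← σ.symm_apply_eq] at hxf
      rw [huniq f ⟨hf, hxf⟩]

theorem sum_eq_sum_pairs {M : Type*} [AddCommMonoid M] (hp : IsPairPartition V p) (g : α → M) :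
    ∑ x ∈ V, g x = ∑ e ∈ p, (g e.1 + g e.2) := by
  have hV : V = p.biUnion fun e => {e.1, e.2} := by
    ext x
    simp only [mem_biUnion, mem_insert, mem_singleton]
    refine ⟨fun hx => ?_, fun ⟨e, he, hxe⟩ => hp.endpoint_mem he hxe⟩
    obtain ⟨e, ⟨he, hxe⟩, -⟩ := hp.2 x hx
    exact ⟨e, he, hxe⟩
  rw [hV, sum_biUnion]
  · exact sum_congr rfl fun e he => sum_pair (hp.1 e he).1.ne
  · intro e he f hf hef
    refine disjoint_left.2 fun x hxe hxf => hef ?_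
    simp only [mem_insert, mem_singleton] at hxe hxf
    exact hp.eq_of_mem (hp.endpoint_mem he hxe) he hf hxe hxf

end IsPairPartition

/-! ### Crossings -/

def Crosses (e f : α × α) : Prop := e.1 < f.1 ∧ f.1 < e.2 ∧ e.2 < f.2

noncomputable def crossings (p : Finset (α × α)) : ℕ := #{x ∈ p ×ˢ p | Crosses x.1 x.2}

noncomputable def crossCount (e f : α × α) : ℕ :=
  (if Crosses e f then 1 else 0) + (if Crosses f e then 1 else 0)

theorem crossings_eq_sum (p : Finset (α × α)) :
    crossings p = ∑ e ∈ p, ∑ f ∈ p, if Crosses e f then 1 else 0 := by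
  rw [crossings, card_filter, sum_product]

theorem crossings_insert {e : α × α} (he : e ∉ q) :
    crossings (insert e q) = crossings q + ∑ f ∈ q, crossCount e f := by
  simp only [crossings_eq_sum, sum_insert he, crossCount, sum_add_distrib,
    if_neg (fun h : Crosses e e => lt_irrefl _ h.1)]
  ring

/-- Modulo 2, `numEndpointsLt e x` is the indicator of `x` lying strictly between the endpoints
of `e`; two pairs with distinct endpoints cross iff exactly one endpoint of one lies between
the endpoints of the other. -/
noncomputable def numEndpointsLt (e : α × α) (x : α) : ℕ :=
  (if e.1 < x then 1 else 0) + (if e.2 < x then 1 else 0)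

theorem numEndpointsLt_sortPair (x y z : α) :
    numEndpointsLt (sortPair x y) z = numEndpointsLt (x, y) z := by
  unfold numEndpointsLt sortPair
  rcases le_total x y with h | h <;> simp [h, add_comm]

theorem numEndpointsLt_sortPair_fst_add_snd (e : α × α) (x y : α) :
    numEndpointsLt e (sortPair x y).1 + numEndpointsLt e (sortPair x y).2 =
      numEndpointsLt e x + numEndpointsLt e y := by
  unfold sortPair
  rcases le_total x y with h | h <;> simp [h, add_comm]

theorem crossCount_mod_two {e f : α × α} (he : e.1 < e.2) (hf : f.1 < f.2) (h11 : e.1 ≠ f.1)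
    (h21 : e.2 ≠ f.1) (h22 : e.2 ≠ f.2) :
    crossCount e f % 2 = (numEndpointsLt e f.1 + numEndpointsLt e f.2) % 2 := by
  unfold crossCount Crosses numEndpointsLt
  grind

theorem crossCount_sortPair_mod_two {x y : α} {f : α × α} (hxy : x ≠ y) (hf : f.1 < f.2)
    (h1 : f.1 ≠ x ∧ f.1 ≠ y) (h2 : f.2 ≠ x ∧ f.2 ≠ y) :
    crossCount (sortPair x y) f % 2 =
      (numEndpointsLt (x, y) f.1 + numEndpointsLt (x, y) f.2) % 2 := by
  rw [← numEndpointsLt_sortPair x y f.1, ← numEndpointsLt_sortPair x y f.2]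
  apply crossCount_mod_two (sortPair_fst_lt_snd hxy) hf <;>
    rcases min_choice x y with h | h <;> rcases max_choice x y with h' | h' <;>
    simp only [sortPair, h, h'] <;> grind

theorem crossCount_least_mod_two {i k : α} {f : α × α} (hf : f.1 < f.2) (hi : i < f.1)
    (hk : f.2 ≠ k) :
    crossCount (i, k) f % 2 = ((if f.1 < k then 1 else 0) + (if f.2 < k then 1 else 0)) % 2 := by
  unfold crossCount Crosses
  grind

theorem crossCount_swap_mod_two {i a b j : α} {f : α × α} (hia : i < a) (hib : i < b)
    (haj : a ≠ j) (hbj : b ≠ j) (hf : f.1 < f.2)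
    (h1 : f.1 ≠ i ∧ f.1 ≠ a ∧ f.1 ≠ b ∧ f.1 ≠ j) (h2 : f.2 ≠ i ∧ f.2 ≠ a ∧ f.2 ≠ b ∧ f.2 ≠ j) :
    (crossCount (i, a) f + crossCount (sortPair j b) f + crossCount (i, b) f +
      crossCount (sortPair j a) f) % 2 = 0 := by
  rw [← sortPair_of_lt hia, ← sortPair_of_lt hib]
  have := crossCount_sortPair_mod_two hia.ne hf ⟨h1.1, h1.2.1⟩ ⟨h2.1, h2.2.1⟩
  have := crossCount_sortPair_mod_two hib.ne hf ⟨h1.1, h1.2.2.1⟩ ⟨h2.1, h2.2.2.1⟩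
  have := crossCount_sortPair_mod_two hbj.symm hf ⟨h1.2.2.2, h1.2.2.1⟩ ⟨h2.2.2.2, h2.2.2.1⟩
  have := crossCount_sortPair_mod_two haj.symm hf ⟨h1.2.2.2, h1.2.1⟩ ⟨h2.2.2.2, h2.2.1⟩
  simp only [numEndpointsLt] at *
  omega

theorem crossCount_swap_pair_mod_two {i a b j : α} (hia : i < a) (hib : i < b) (hij : i < j)
    (hab : a ≠ b) (haj : a ≠ j) (hbj : b ≠ j) :
    (crossCount (i, a) (sortPair j b) + crossCount (i, b) (sortPair j a) +
      (if b < j then 1 else 0) + (if a < j then 1 else 0)) % 2 = 1 := by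
  have hijb := ne_sortPair_of_ne hij.ne hib.ne
  have hija := ne_sortPair_of_ne hij.ne hia.ne
  have hajb := ne_sortPair_of_ne haj hab
  have hbja := ne_sortPair_of_ne hbj hab.symm
  have h1 := crossCount_mod_two (e := (i, a)) hia (sortPair_fst_lt_snd hbj.symm) hijb.1 hajb.1
    hajb.2
  have h2 := crossCount_mod_two (e := (i, b)) hib (sortPair_fst_lt_snd haj.symm) hija.1 hbja.1
    hbja.2
  rw [numEndpointsLt_sortPair_fst_add_snd] at h1 h2
  rcases lt_or_gt_of_ne hab with h | h <;>
    simp [numEndpointsLt, hia, hib, hij, h, h.not_gt] at h1 h2 <;> omega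

theorem IsPairPartition.crossings_insert_mod_two (hq : IsPairPartition W q) {i k : α}
    (hiW : ∀ x ∈ W, i < x) (hk : k ∉ W) :
    crossings (insert (i, k) q) % 2 = (crossings q + #{x ∈ W | x < k}) % 2 := by
  have hsum : (∑ f ∈ q, crossCount (i, k) f) % 2 = #{x ∈ W | x < k} % 2 := by
    rw [card_filter, hq.sum_eq_sum_pairs, sum_nat_mod, sum_congr rfl fun f hf => ?_, ← sum_nat_mod]
    obtain ⟨hlt, h1, h2⟩ := hq.1 f hf
    exact crossCount_least_mod_two hlt (hiW _ h1) fun h => hk (h ▸ h2)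
  rw [crossings_insert (hq.notMem_of_fst_notMem fun h => lt_irrefl i (hiW i h)), Nat.add_mod,
    hsum, ← Nat.add_mod]

theorem IsPairPartition.notMem_insert_sortPair (hq : IsPairPartition W q) {i a b j : α}
    (hi : i ∉ W) (hj : j ∉ W) (hb : b ∉ W) (hij : i ≠ j) (hib : i ≠ b) :
    sortPair j b ∉ q ∧ (i, a) ∉ insert (sortPair j b) q := by
  refine ⟨hq.notMem_of_fst_notMem ?_, ?_⟩
  · rcases min_choice j b with h | h <;> rw [sortPair, h] <;> assumption
  · rw [mem_insert, not_or]
    exact ⟨fun h => (ne_sortPair_of_ne hij hib).1 (congrArg Prod.fst h),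
      hq.notMem_of_fst_notMem hi⟩

theorem IsPairPartition.crossings_swap_mod_two (hq : IsPairPartition W q) {i a b j : α}
    (hi : i ∉ W) (ha : a ∉ W) (hb : b ∉ W) (hj : j ∉ W) (hia : i < a) (hib : i < b) (hij : i < j)
    (hab : a ≠ b) (haj : a ≠ j) (hbj : b ≠ j) :
    (crossings (insert (i, a) (insert (sortPair j b) q)) + (if b < j then 1 else 0) +
      (crossings (insert (i, b) (insert (sortPair j a) q)) + (if a < j then 1 else 0))) % 2 =
        1 := by
  obtain ⟨hjb, hia'⟩ := hq.notMem_insert_sortPair (a := a) hi hj hb hij.ne hib.ne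
  obtain ⟨hja, hib'⟩ := hq.notMem_insert_sortPair (a := b) hi hj ha hij.ne hia.ne
  have hsum : (∑ f ∈ q, (crossCount (i, a) f + crossCount (sortPair j b) f +
      crossCount (i, b) f + crossCount (sortPair j a) f)) % 2 = 0 := by
    rw [sum_nat_mod, sum_eq_zero fun f hf => ?_, Nat.zero_mod]
    obtain ⟨hlt, h1, h2⟩ := hq.1 f hf
    exact crossCount_swap_mod_two hia hib haj hbj hlt
      ⟨ne_of_mem_of_not_mem h1 hi, ne_of_mem_of_not_mem h1 ha, ne_of_mem_of_not_mem h1 hb,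
        ne_of_mem_of_not_mem h1 hj⟩
      ⟨ne_of_mem_of_not_mem h2 hi, ne_of_mem_of_not_mem h2 ha, ne_of_mem_of_not_mem h2 hb,
        ne_of_mem_of_not_mem h2 hj⟩
  have hpair := crossCount_swap_pair_mod_two hia hib hij hab haj hbj
  simp only [sum_add_distrib] at hsum
  rw [crossings_insert hia', crossings_insert hjb, sum_insert hjb, crossings_insert hib',
    crossings_insert hja, sum_insert hja]
  omega

/-! ### The Pfaffian and the hafnian -/

section Field

variable {K : Type*} [Field K]

noncomputable def pfTerm (z : α → K) (p : Finset (α × α)) : K :=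
  (-1) ^ crossings p * ∏ e ∈ p, (z e.1 - z e.2)⁻¹

/-- The Pfaffian of the antisymmetric matrix `((z x - z y)⁻¹)` indexed by `V`. -/
noncomputable def pfaffianInvSub (V : Finset α) (z : α → K) : K :=
  ∑ p ∈ pairPartitions V, pfTerm z p

/-- The hafnian of the symmetric matrix `((z x - z y)⁻²)` indexed by `V`. -/
noncomputable def hafnianInvSubSq (V : Finset α) (z : α → K) : K :=
  ∑ p ∈ pairPartitions V, ∏ e ∈ p, ((z e.1 - z e.2)⁻¹) ^ 2

theorem IsPairPartition.pfTerm_insert (hq : IsPairPartition W q) {i k : α}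
    (hiW : ∀ x ∈ W, i < x) (hk : k ∉ W) (z : α → K) :
    pfTerm z (insert (i, k) q) = (-1) ^ #{x ∈ W | x < k} * (z i - z k)⁻¹ * pfTerm z q := by
  rw [pfTerm, pfTerm, neg_one_pow_eq_pow_mod_two, hq.crossings_insert_mod_two hiW hk,
    ← neg_one_pow_eq_pow_mod_two, pow_add,
    prod_insert (hq.notMem_of_fst_notMem fun h => lt_irrefl i (hiW i h))]
  ring

theorem pfTerm_eq_zero {u : α → K} {x y : α} (h : (x, y) ∈ p) (hxy : u x = u y) :
    pfTerm u p = 0 := by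
  rw [pfTerm, prod_eq_zero h (by rw [hxy, sub_self, inv_zero]), mul_zero]

theorem IsPairPartition.pfTerm_add_pfTerm_swap (hq : IsPairPartition W q) {i a b j : α}
    (hi : i ∉ W) (ha : a ∉ W) (hb : b ∉ W) (hj : j ∉ W) (hia : i < a) (hib : i < b) (hij : i < j)
    (hab : a ≠ b) (haj : a ≠ j) (hbj : b ≠ j) {u : α → K} (hu : u i = u j) :
    pfTerm u (insert (i, a) (insert (sortPair j b) q)) +
      pfTerm u (insert (i, b) (insert (sortPair j a) q)) = 0 := by
  obtain ⟨hjb, hia'⟩ := hq.notMem_insert_sortPair (a := a) hi hj hb hij.ne hib.ne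
  obtain ⟨hja, hib'⟩ := hq.notMem_insert_sortPair (a := b) hi hj ha hij.ne hia.ne
  have hsign := neg_one_pow_add_neg_one_pow (R := K)
    (hq.crossings_swap_mod_two hi ha hb hj hia hib hij hab haj hbj)
  simp only [pow_add] at hsign
  simp only [pfTerm, prod_insert hia', prod_insert hjb, prod_insert hib', prod_insert hja,
    inv_sub_sortPair, hu]
  linear_combination ((u j - u a)⁻¹ * (u j - u b)⁻¹ * ∏ e ∈ q, (u e.1 - u e.2)⁻¹) * hsign

end Field

/-! ### Two equal rows make the Pfaffian vanish -/

theorem IsPairPartition.exists_eq_insert_insert (hp : IsPairPartition V p) {i j : α}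
    (hi : IsLeast (V : Set α) i) (hj : j ∈ V) (hji : j ≠ i) (hij : (i, j) ∉ p) :
    ∃ a b W q, IsPairPartition W q ∧ i ∉ W ∧ a ∉ W ∧ b ∉ W ∧ j ∉ W ∧ i < a ∧ i < b ∧
      a ≠ b ∧ a ≠ j ∧ b ≠ j ∧ p = insert (i, a) (insert (sortPair j b) q) := by
  have hlt : ∀ x ∈ V, x ≠ i → i < x := fun x hx hne => lt_of_le_of_ne (hi.2 hx) hne.symm
  obtain ⟨a, hpa⟩ := hp.exists_sortPair_mem hi.1
  obtain ⟨b, hpb⟩ := hp.exists_sortPair_mem hj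
  obtain ⟨-, haV, hia⟩ := hp.mem_of_sortPair_mem hpa
  obtain ⟨-, hbV, hjb⟩ := hp.mem_of_sortPair_mem hpb
  have hia : i < a := hlt a haV hia.symm
  rw [sortPair_of_lt hia] at hpa
  have hib : i < b := by
    refine hlt b hbV fun hbi => hij ?_
    rwa [hbi, sortPair_comm, sortPair_of_lt (hlt j hj hji)] at hpb
  have haj : a ≠ j := by
    rintro rfl
    exact hij hpa
  have hne : sortPair j b ≠ (i, a) := fun h =>
    (ne_sortPair_of_ne (hlt j hj hji).ne hib.ne).1 (congrArg Prod.fst h).symm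
  have hab : a ≠ b := by
    rintro rfl
    exact hne (hp.eq_of_mem haV hpb hpa (eq_or_eq_sortPair.2 (Or.inr rfl)) (Or.inr rfl))
  have hq := (hp.erase hpa).erase (mem_erase.2 ⟨hne, hpb⟩)
  refine ⟨a, b, _, _, hq, ?_, ?_, ?_, ?_, hia, hib, hab, haj, hjb.symm,
    by rw [insert_erase (mem_erase.2 ⟨hne, hpb⟩), insert_erase hpa]⟩
  all_goals simp only [mem_erase, not_and_or, not_not]
  · simp
  · simp
  · have := eq_or_eq_sortPair.2 (Or.inr rfl : b = j ∨ b = b)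
    tauto
  · have := eq_or_eq_sortPair.2 (Or.inl rfl : j = j ∨ j = b)
    tauto

theorem IsPairPartition.permPairs_swap_insert_insert (hq : IsPairPartition W q) {i a b j : α}
    (hi : i ∉ W) (hj : j ∉ W) (hia : i ≠ a) (haj : a ≠ j) (hib : i < b) (hbj : b ≠ j) :
    permPairs (swap i j) (insert (i, a) (insert (sortPair j b) q)) =
      insert (i, b) (insert (sortPair j a) q) := by
  have hq' : q.image (fun e => sortPair (swap i j e.1) (swap i j e.2)) = q := by
    conv_rhs => rw [← image_id (s := q)]
    refine image_congr fun e he => ?_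
    obtain ⟨hlt, h1, h2⟩ := hq.1 e he
    rw [swap_apply_of_ne_of_ne (ne_of_mem_of_not_mem h1 hi) (ne_of_mem_of_not_mem h1 hj),
      swap_apply_of_ne_of_ne (ne_of_mem_of_not_mem h2 hi) (ne_of_mem_of_not_mem h2 hj),
      sortPair_of_lt hlt, id]
  rw [permPairs, image_insert, image_insert, hq', sortPair_map_sortPair, swap_apply_left,
    swap_apply_right, swap_apply_of_ne_of_ne hia.symm haj, swap_apply_of_ne_of_ne hib.ne' hbj,
    sortPair_comm, sortPair_of_lt hib, insert_comm]

theorem mem_permPairs_swap {i j : α} (hij : i < j) (h : (i, j) ∈ p) :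
    (i, j) ∈ permPairs (swap i j) p := by
  rw [permPairs, mem_image]
  exact ⟨(i, j), h, by rw [swap_apply_left, swap_apply_right, sortPair_comm, sortPair_of_lt hij]⟩

/-- The involution `permPairs (swap i j)` exchanges the partners of `i` and `j`. -/
theorem pfaffianInvSub_eq_zero {K : Type*} [Field K] {i j : α} (hi : IsLeast (V : Set α) i)
    (hj : j ∈ V) (hji : j ≠ i) {u : α → K} (hu : u i = u j) : pfaffianInvSub V u = 0 := by
  have hij : i < j := lt_of_le_of_ne (hi.2 hj) hji.symm
  have hiV : i ∈ V := hi.1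
  refine sum_involution (fun p _ => permPairs (swap i j) p) (fun p hp => ?_)
    (fun p hp hne => ?_) (fun p hp => ?_) (fun p hp => ?_)
  · rw [mem_pairPartitions] at hp
    by_cases hmem : (i, j) ∈ p
    · rw [pfTerm_eq_zero hmem hu, pfTerm_eq_zero (mem_permPairs_swap hij hmem) hu, add_zero]
    obtain ⟨a, b, W, q, hq, hiW, haW, hbW, hjW, hia, hib, hab, haj, hbj, rfl⟩ :=
      hp.exists_eq_insert_insert hi hj hji hmem
    rw [hq.permPairs_swap_insert_insert hiW hjW hia.ne haj hib hbj]
    exact hq.pfTerm_add_pfTerm_swap hiW haW hbW hjW hia hib hij hab haj hbj hu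
  · rw [mem_pairPartitions] at hp
    obtain ⟨a, b, W, q, hq, hiW, -, -, hjW, hia, hib, hab, haj, hbj, rfl⟩ :=
      hp.exists_eq_insert_insert hi hj hji fun h => hne (pfTerm_eq_zero h hu)
    rw [hq.permPairs_swap_insert_insert hiW hjW hia.ne haj hib hbj]
    intro h
    have hib' := h ▸ mem_insert_self (i, b) (insert (sortPair j a) q)
    simp only [mem_insert, Prod.mk.injEq, true_and] at hib'
    rcases hib' with h | h | h
    · exact hab h.symm
    · exact (ne_sortPair_of_ne hij.ne hib.ne).1 (congrArg Prod.fst h)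
    · exact hiW (hq.1 _ h).2.1
  · rw [mem_pairPartitions] at hp ⊢
    refine hp.perm _ fun x => ?_
    rcases eq_or_ne x i with rfl | hxi
    · simp [hj, hiV]
    rcases eq_or_ne x j with rfl | hxj
    · simp [hj, hiV]
    · rw [swap_apply_of_ne_of_ne hxi hxj]
  · exact permPairs_permPairs (swap_apply_self i j) fun e he => ((mem_pairPartitions.1 hp).1 e he).1

/-! ### Expansion along the least element -/

theorem sum_pairPartitions_filter_mem {M : Type*} [AddCommMonoid M] {a b : α} (hab : a < b)
    (ha : a ∈ V) (hb : b ∈ V) (F : Finset (α × α) → M) :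
    ∑ p ∈ pairPartitions V with (a, b) ∈ p, F p =
      ∑ q ∈ pairPartitions ((V.erase a).erase b), F (insert (a, b) q) := by
  have hV : insert a (insert b ((V.erase a).erase b)) = V := by
    rw [insert_erase (mem_erase.2 ⟨hab.ne', hb⟩), insert_erase ha]
  refine sum_nbij' (fun p => p.erase (a, b)) (insert (a, b)) (fun p hp => ?_) (fun q hq => ?_)
    (fun p hp => insert_erase (mem_filter.1 hp).2) (fun q hq => ?_)
    (fun p hp => by rw [insert_erase (mem_filter.1 hp).2])
  · rw [mem_filter, mem_pairPartitions] at hp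
    exact mem_pairPartitions.2 (hp.1.erase hp.2)
  · rw [mem_pairPartitions] at hq
    rw [mem_filter, mem_pairPartitions, ← hV]
    exact ⟨hq.insert_of_notMem hab (by simp) (by simp), mem_insert_self _ _⟩
  · exact erase_insert ((mem_pairPartitions.1 hq).notMem_of_fst_notMem (by simp))

theorem sum_pairPartitions_eq_sum_insert {M : Type*} [AddCommMonoid M] {i : α}
    (hi : IsLeast (V : Set α) i) (F : Finset (α × α) → M) :
    ∑ p ∈ pairPartitions V, F p =
      ∑ k ∈ V.erase i, ∑ q ∈ pairPartitions ((V.erase i).erase k), F (insert (i, k) q) := by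
  have hone : ∀ p ∈ pairPartitions V, ∑ k ∈ V.erase i, (if (i, k) ∈ p then F p else 0) = F p := by
    intro p hp
    rw [mem_pairPartitions] at hp
    obtain ⟨k, hk⟩ := hp.exists_sortPair_mem hi.1
    obtain ⟨-, hkV, hik⟩ := hp.mem_of_sortPair_mem hk
    have hk' : k ∈ V.erase i := mem_erase.2 ⟨hik.symm, hkV⟩
    rw [sortPair_of_lt (lt_of_isLeast_of_mem_erase hi hk')] at hk
    rw [sum_eq_single_of_mem k hk' fun l _ hlk => if_neg fun hl => hlk ?_, if_pos hk]
    exact (Prod.mk.inj (hp.eq_of_mem hi.1 hl hk (Or.inl rfl) (Or.inl rfl))).2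
  rw [← sum_congr rfl hone, sum_comm]
  refine sum_congr rfl fun k hk => ?_
  rw [← sum_filter, sum_pairPartitions_filter_mem (lt_of_isLeast_of_mem_erase hi hk) hi.1
    (mem_of_mem_erase hk)]

section Field

variable {K : Type*} [Field K]

theorem pfaffianInvSub_eq_sum {i : α} (hi : IsLeast (V : Set α) i) (z : α → K) :
    pfaffianInvSub V z = ∑ k ∈ V.erase i, (-1) ^ #{x ∈ (V.erase i).erase k | x < k} *
      (z i - z k)⁻¹ * pfaffianInvSub ((V.erase i).erase k) z := by
  rw [pfaffianInvSub, sum_pairPartitions_eq_sum_insert hi]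
  refine sum_congr rfl fun k _ => ?_
  rw [pfaffianInvSub, mul_sum]
  exact sum_congr rfl fun q hq => (mem_pairPartitions.1 hq).pfTerm_insert
    (fun x hx => lt_of_isLeast_of_mem_erase hi (mem_of_mem_erase hx)) (notMem_erase k _) z

theorem hafnianInvSubSq_eq_sum {i : α} (hi : IsLeast (V : Set α) i) (z : α → K) :
    hafnianInvSubSq V z = ∑ k ∈ V.erase i,
      ((z i - z k)⁻¹) ^ 2 * hafnianInvSubSq ((V.erase i).erase k) z := by
  rw [hafnianInvSubSq, sum_pairPartitions_eq_sum_insert hi]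
  refine sum_congr rfl fun k _ => ?_
  rw [hafnianInvSubSq, mul_sum]
  exact sum_congr rfl fun q hq =>
    prod_insert ((mem_pairPartitions.1 hq).notMem_of_fst_notMem (by simp))

theorem pfaffianInvSub_congr {u z : α → K} (h : ∀ x ∈ V, u x = z x) :
    pfaffianInvSub V u = pfaffianInvSub V z := by
  refine sum_congr rfl fun p hp => ?_
  obtain ⟨hp, -⟩ := mem_pairPartitions.1 hp
  rw [pfTerm, pfTerm, prod_congr rfl fun e he => by rw [h _ (hp e he).2.1, h _ (hp e he).2.2]]

theorem pfaffianInvSub_sq (z : α → K) (V : Finset α) (hz : Set.InjOn z V) :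
    pfaffianInvSub V z ^ 2 = hafnianInvSubSq V z := by
  induction V using Finset.strongInduction with
  | H V ih =>
  rcases V.eq_empty_or_nonempty with rfl | hV
  · simp [pfaffianInvSub, hafnianInvSubSq, pairPartitions_empty, pfTerm, crossings]
  set i := V.min' hV
  have hi : IsLeast (V : Set α) i := V.isLeast_min' hV
  set s := V.erase i
  set c : α → K := fun k => (-1) ^ #{x ∈ s.erase k | x < k} * pfaffianInvSub (s.erase k) z
  have hsub : ∀ k, s.erase k ⊂ V := fun k => (erase_subset k s).trans_ssubset (erase_ssubset hi.1)
  have hw : ∀ k ∈ s, z i ≠ z k := fun k hk h =>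
    ne_of_mem_erase hk (hz hi.1 (mem_of_mem_erase hk) h).symm
  -- the sum below is the expansion of the Pfaffian with `z i` replaced by `z j`
  have hres : ∀ j ∈ s, ∑ k ∈ s, c k * (z j - z k)⁻¹ = 0 := by
    intro j hj
    have hzero := pfaffianInvSub_eq_zero hi (mem_of_mem_erase hj) (ne_of_mem_erase hj)
      (u := update z i (z j)) (by simp [update_of_ne (ne_of_mem_erase hj)])
    rw [pfaffianInvSub_eq_sum hi] at hzero
    rw [← hzero]
    refine sum_congr rfl fun k hk => ?_
    rw [pfaffianInvSub_congr fun x hx => update_of_ne (ne_of_mem_erase (mem_of_mem_erase hx)) _ _,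
      update_self, update_of_ne (ne_of_mem_erase hk)]
    ring
  rw [pfaffianInvSub_eq_sum hi, hafnianInvSubSq_eq_sum hi]
  calc _ = (∑ k ∈ s, c k * (z i - z k)⁻¹) ^ 2 := by
        congr 1
        exact sum_congr rfl fun k _ => by ring
    _ = ∑ k ∈ s, (c k * (z i - z k)⁻¹) ^ 2 :=
        sq_sum_mul_inv_sub (hz.mono (coe_subset.2 (erase_subset i V))) hw c hres
    _ = _ := sum_congr rfl fun k _ => by
        rw [← ih _ (hsub k) (hz.mono (coe_subset.2 (hsub k).subset))]
        simp [c, mul_pow, ← pow_mul]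
        ring

end Field

theorem crossingNumber_eq_crossings (M : ℕ) (p : Finset (Fin (2 * M) × Fin (2 * M))) :
    crossingNumber M p = crossings p := by
  unfold crossingNumber crossings Crosses
  congr

theorem filter_isPerfectMatching_eq (M : ℕ) :
    univ.filter (IsPerfectMatching M) = pairPartitions univ := by
  ext p
  simp [mem_pairPartitions, IsPerfectMatching, IsPairPartition]

end PairPartition

theorem stmt0_general (M : ℕ) (z : Fin (2*M) → ℂ)
    (hz : Function.Injective z) :
    (∑ p ∈ Finset.univ.filter (IsPerfectMatching M),
        (-1 : ℂ) ^ (crossingNumber M p) * ∏ e ∈ p, (z e.1 - z e.2)⁻¹) ^ 2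
      = ∑ p ∈ Finset.univ.filter (IsPerfectMatching M),
          ∏ e ∈ p, ((z e.1 - z e.2)⁻¹) ^ 2 := by
  simpa only [PairPartition.filter_isPerfectMatching_eq, PairPartition.crossingNumber_eq_crossings,
    PairPartition.pfaffianInvSub, PairPartition.hafnianInvSubSq, PairPartition.pfTerm] using
    PairPartition.pfaffianInvSub_sq z Finset.univ hz.injOn

theorem stmt0 (M : ℕ) (hM : 1 ≤ M) (z : Fin (2*M) → ℂ)
    (hz : Function.Injective z) :
    (∑ p ∈ Finset.univ.filter (IsPerfectMatching M),
        (-1 : ℂ) ^ (crossingNumber M p) * ∏ e ∈ p, (z e.1 - z e.2)⁻¹) ^ 2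
      = ∑ p ∈ Finset.univ.filter (IsPerfectMatching M),
          ∏ e ∈ p, ((z e.1 - z e.2)⁻¹) ^ 2 :=
  stmt0_general M z hz
end

section
/- Let p be a perfect matching of {1, …, 2M} with pairs {a_1, b_1}, …, {a_M, b_M} normalized so that a_i < b_i for each i and a_1 < a_2 < … < a_M, and let σ_p be the permutation of {1, …, 2M} defined by σ_p(2i−1) = a_i and σ_p(2i) = b_i. Then the sign of σ_p equals (−1)^{c(p)}, where c(p) is the crossing number of p. -/
/-!
The sign of a permutation of `Fin n` is the parity of its number of inversions. Read `σ` as the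
word `a₁ b₁ a₂ b₂ … a_M b_M`. Since `a` increases and `aᵢ < bᵢ`, no letter `aᵢ` starts an
inversion, so the inversions are the pairs `bᵢ … aⱼ` with `i < j`, `aⱼ < bᵢ`, and `bᵢ … bⱼ` with
`i < j`, `bⱼ < bᵢ`. A pair of the first kind is either a crossing (`bᵢ < bⱼ`) or a nesting
(`bⱼ < bᵢ`), and the nestings are exactly the pairs of the second kind, so the number of
inversions is `c(p)` plus twice the number of nestings.
-/

open scoped BigOperators

/-- The crossing number of the matching with pairs `{a i, b i}`: the number of
pairs of indices `(i, j)` with `a i < a j < b i < b j`. -/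
def crossingCount (M : ℕ) (a b : Fin M → Fin (2*M)) : ℕ :=
  (Finset.univ.filter (fun ij : Fin M × Fin M =>
      a ij.1 < a ij.2 ∧ a ij.2 < b ij.1 ∧ b ij.1 < b ij.2)).card

open Finset Equiv Function

namespace Equiv.Perm

variable {n : ℕ}

def IsInversion (σ : Perm (Fin n)) (x y : Fin n) : Prop :=
  x < y ∧ σ y < σ x

instance (σ : Perm (Fin n)) (x y : Fin n) : Decidable (σ.IsInversion x y) :=
  inferInstanceAs (Decidable (_ ∧ _))

def inversions (σ : Perm (Fin n)) : Finset (Fin n × Fin n) :=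
  {p | σ.IsInversion p.1 p.2}

theorem sign_eq_neg_one_pow_card_inversions (σ : Perm (Fin n)) :
    (sign σ : ℤ) = (-1) ^ #σ.inversions := by
  have hsign (i j : Fin n) : (if i < j then (if σ i < σ j then 1 else -1) else 1 : ℤ) =
      if σ.IsInversion i j then -1 else 1 := by
    by_cases hij : i < j
    · rcases lt_or_gt_of_ne (σ.injective.ne hij.ne) with h | h <;>
        simp [IsInversion, hij, h, h.not_gt]
    · simp [IsInversion, hij]
  rw [sign_eq_prod_prod_Ioi, inversions, ← prod_const, prod_filter, Fintype.prod_prod_type]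
  push_cast
  refine prod_congr rfl fun i _ => ?_
  rw [← filter_lt_eq_Ioi, prod_filter]
  refine prod_congr rfl fun j _ => ?_
  rw [← hsign]
  split_ifs <;> simp

end Equiv.Perm

namespace Fin

variable {M : ℕ}

def evenPos (i : Fin M) : Fin (2 * M) := ⟨2 * i.1, by omega⟩

def oddPos (i : Fin M) : Fin (2 * M) := ⟨2 * i.1 + 1, by omega⟩

theorem sum_univ_two_mul {R : Type*} [AddCommMonoid R] (f : Fin (2 * M) → R) :
    ∑ x, f x = ∑ i : Fin M, (f i.evenPos + f i.oddPos) := by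
  rw [← (finProdFinEquiv.trans (finCongr (Nat.mul_comm M 2))).sum_comp, Fintype.sum_prod_type]
  refine sum_congr rfl fun i _ => ?_
  rw [sum_univ_two]
  congr 2 <;> ext <;> simp [evenPos, oddPos, add_comm]

@[simp] theorem evenPos_lt_evenPos {i j : Fin M} : i.evenPos < j.evenPos ↔ i < j := by
  simp only [evenPos, Fin.lt_def]; omega

@[simp] theorem evenPos_lt_oddPos {i j : Fin M} : i.evenPos < j.oddPos ↔ i ≤ j := by
  simp only [evenPos, oddPos, Fin.lt_def, Fin.le_def]; omega

@[simp] theorem oddPos_lt_evenPos {i j : Fin M} : i.oddPos < j.evenPos ↔ i < j := by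
  simp only [evenPos, oddPos, Fin.lt_def]; omega

@[simp] theorem oddPos_lt_oddPos {i j : Fin M} : i.oddPos < j.oddPos ↔ i < j := by
  simp only [oddPos, Fin.lt_def]; omega

end Fin

section Matching

variable {M : ℕ} {a b : Fin M → Fin (2 * M)} {σ : Perm (Fin (2 * M))}

theorem not_isInversion_evenPos_evenPos (ha : StrictMono a) (hσa : ∀ i, σ i.evenPos = a i)
    (i j : Fin M) : ¬ σ.IsInversion i.evenPos j.evenPos := by
  rintro ⟨hij, hji⟩
  rw [hσa, hσa] at hji
  exact (ha.lt_iff_lt.1 hji).not_gt (Fin.evenPos_lt_evenPos.1 hij)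

theorem not_isInversion_evenPos_oddPos (hab : ∀ i, a i < b i) (ha : StrictMono a)
    (hσa : ∀ i, σ i.evenPos = a i) (hσb : ∀ i, σ i.oddPos = b i) (i j : Fin M) :
    ¬ σ.IsInversion i.evenPos j.oddPos := by
  rintro ⟨hij, hji⟩
  rw [hσa, hσb] at hji
  exact (hji.trans_le (ha.monotone (Fin.evenPos_lt_oddPos.1 hij))).not_gt (hab j)

theorem isInversion_oddPos_evenPos_iff (hσa : ∀ i, σ i.evenPos = a i)
    (hσb : ∀ i, σ i.oddPos = b i) (i j : Fin M) :
    σ.IsInversion i.oddPos j.evenPos ↔ i < j ∧ a j < b i := by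
  rw [Perm.IsInversion, hσa, hσb, Fin.oddPos_lt_evenPos]

theorem isInversion_oddPos_oddPos_iff (hσb : ∀ i, σ i.oddPos = b i) (i j : Fin M) :
    σ.IsInversion i.oddPos j.oddPos ↔ i < j ∧ b j < b i := by
  rw [Perm.IsInversion, hσb, hσb, Fin.oddPos_lt_oddPos]

theorem card_inversions_eq (hab : ∀ i, a i < b i) (ha : StrictMono a)
    (hσa : ∀ i, σ i.evenPos = a i) (hσb : ∀ i, σ i.oddPos = b i) :
    #σ.inversions = #{p : Fin M × Fin M | p.1 < p.2 ∧ a p.2 < b p.1} +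
      #{p : Fin M × Fin M | p.1 < p.2 ∧ b p.2 < b p.1} := by
  simp only [Perm.inversions, card_filter, Fintype.sum_prod_type, Fin.sum_univ_two_mul,
    sum_add_distrib, sum_const_zero, zero_add, if_neg (not_isInversion_evenPos_evenPos ha hσa _ _),
    if_neg (not_isInversion_evenPos_oddPos hab ha hσa hσb _ _),
    isInversion_oddPos_evenPos_iff hσa hσb, isInversion_oddPos_oddPos_iff hσb]

theorem card_lt_and_lt_eq_crossingCount_add (hab : ∀ i, a i < b i) (ha : StrictMono a)
    (hb : Injective b) :
    #{p : Fin M × Fin M | p.1 < p.2 ∧ a p.2 < b p.1} =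
      crossingCount M a b + #{p : Fin M × Fin M | p.1 < p.2 ∧ b p.2 < b p.1} := by
  rw [crossingCount, ← card_filter_add_card_filter_not (fun p : Fin M × Fin M => b p.1 < b p.2),
    filter_filter, filter_filter]
  congr 2
  · ext p
    simp [ha.lt_iff_lt, and_assoc]
  · ext p
    simp only [mem_filter, mem_univ, true_and, not_lt]
    constructor
    · rintro ⟨⟨hij, -⟩, hle⟩
      exact ⟨hij, hle.lt_of_ne (hb.ne hij.ne')⟩
    · rintro ⟨hij, hlt⟩
      exact ⟨⟨hij, (hab _).trans hlt⟩, hlt.le⟩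

end Matching

/-- If `p` is a perfect matching of `{1, …, 2M}` with pairs `{a i, b i}`,
normalized so that `a i < b i` and `a` is strictly increasing, and `σ` is the
permutation sending (in 0-indexed notation) `2*i ↦ a i` and `2*i + 1 ↦ b i`,
then `sign σ = (-1) ^ (crossing number of p)`. -/
theorem stmt1 (M : ℕ) (a b : Fin M → Fin (2*M))
    (hab : ∀ i, a i < b i) (ha : StrictMono a)
    (σ : Equiv.Perm (Fin (2*M)))
    (hσa : ∀ i : Fin M, σ ⟨2 * i.1, by have := i.isLt; omega⟩ = a i)
    (hσb : ∀ i : Fin M, σ ⟨2 * i.1 + 1, by have := i.isLt; omega⟩ = b i) :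
    (Equiv.Perm.sign σ : ℤ) = (-1) ^ (crossingCount M a b) := by
  have hb : Injective b := fun i j h =>
    Fin.ext <| by simpa using σ.injective ((hσb i).trans (h.trans (hσb j).symm))
  rw [σ.sign_eq_neg_one_pow_card_inversions, card_inversions_eq hab ha hσa hσb,
    card_lt_and_lt_eq_crossingCount_add hab ha hb, add_assoc, ← two_mul, pow_add, pow_mul]
  norm_num
end

section
/- Let τ be a symmetric g×g complex matrix whose real part is negative definite. Then for every z ∈ ℂ^g, the family m ↦ exp(4 Q_τ(m) + 2 m·z), indexed by m ∈ ℤ^g, is (absolutely) summable. -/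
/-!
By compactness of the unit sphere, the negative definite form `x ↦ Σ Re τᵢⱼ xᵢ xⱼ` is bounded
above by `-c Σ xᵢ²` for some `c > 0`. Hence `‖exp (4 Q_τ(m) + 2 m·z)‖` is dominated by the
product `∏ᵢ exp (-c mᵢ² + 2 |Re zᵢ| |mᵢ|)`, and a product of summable nonnegative
one-variable families is summable over `ℤ^g`.
-/

open scoped BigOperators

/-- `Q_τ(m) = (1/4) Σ_{i,j} τ_{ij} m_i m_j`. -/
noncomputable def thetaQ {g : ℕ} (τ : Matrix (Fin g) (Fin g) ℂ) (m : Fin g → ℂ) : ℂ :=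
  (1/4) * ∑ i, ∑ j, τ i j * m i * m j

/-- The real part of `τ` is negative definite. -/
def ReNegDef {g : ℕ} (τ : Matrix (Fin g) (Fin g) ℂ) : Prop :=
  ∀ x : Fin g → ℝ, x ≠ 0 → ∑ i, ∑ j, (τ i j).re * x i * x j < 0

open Real Finset

lemma Real.summable_exp_neg_mul_sq_add_mul_abs {c : ℝ} (hc : 0 < c) (b : ℝ) :
    Summable fun n : ℤ => exp (-c * n ^ 2 + b * |(n : ℝ)|) := by
  refine (summable_pow_mul_jacobiTheta₂_term_bound (b / (2 * π)) (div_pos hc pi_pos) 0).congr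
    fun n => ?_
  rw [pow_zero, one_mul, Int.cast_abs]
  congr 1
  field_simp
  ring

lemma summable_pi_prod_of_nonneg {ι : Type*} [Fintype ι] {β : ι → Type*}
    {f : ∀ i, β i → ℝ} (hf : ∀ i, Summable (f i)) (hf₀ : ∀ i b, 0 ≤ f i b) :
    Summable fun m : (∀ i, β i) => ∏ i, f i (m i) := by
  classical
  refine summable_of_sum_le (c := ∏ i, ∑' b, f i b)
    (fun m => prod_nonneg fun i _ => hf₀ i (m i)) fun s => ?_
  calc ∑ m ∈ s, ∏ i, f i (m i)
      ≤ ∑ m ∈ Fintype.piFinset fun i => s.image (· i), ∏ i, f i (m i) :=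
        sum_le_sum_of_subset_of_nonneg
          (fun m hm => Fintype.mem_piFinset.2 fun i => mem_image_of_mem _ hm)
          fun m _ _ => prod_nonneg fun i _ => hf₀ i (m i)
    _ = ∏ i, ∑ b ∈ s.image (· i), f i b := (prod_univ_sum _ _).symm
    _ ≤ ∏ i, ∑' b, f i b :=
        prod_le_prod (fun i _ => sum_nonneg fun b _ => hf₀ i b)
          fun i _ => (hf i).sum_le_tsum _ fun b _ => hf₀ i b

lemma exists_pos_le_neg_mul_norm_sq {E : Type*} [NormedAddCommGroup E] [NormedSpace ℝ E]
    [FiniteDimensional ℝ E] {f : E → ℝ} (hf : Continuous f)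
    (hhom : ∀ (t : ℝ) x, f (t • x) = t ^ 2 * f x) (hneg : ∀ x, x ≠ 0 → f x < 0) :
    ∃ c > 0, ∀ x, f x ≤ -c * ‖x‖ ^ 2 := by
  have hf0 : f 0 = 0 := by simpa using hhom 0 0
  cases subsingleton_or_nontrivial E with
  | inl _ => exact ⟨1, one_pos, fun x => by simp [Subsingleton.elim x 0, hf0]⟩
  | inr _ =>
    obtain ⟨x₀, hx₀, hmax⟩ := (isCompact_sphere (0 : E) 1).exists_isMaxOn
      (NormedSpace.sphere_nonempty.2 zero_le_one) hf.continuousOn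
    have hx₀ : ‖x₀‖ = 1 := by simpa using hx₀
    refine ⟨-f x₀, neg_pos.2 (hneg x₀ (norm_ne_zero_iff.1 (by simp [hx₀]))), fun x => ?_⟩
    rcases eq_or_ne x 0 with rfl | hx
    · simp [hf0]
    have hunit : ‖‖x‖⁻¹ • x‖ = 1 := by
      rw [norm_smul, norm_inv, norm_norm, inv_mul_cancel₀ (norm_ne_zero_iff.2 hx)]
    have hle : f (‖x‖⁻¹ • x) ≤ f x₀ := hmax (by simpa using hunit)
    calc f x = ‖x‖ ^ 2 * f (‖x‖⁻¹ • x) := by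
          rw [← hhom, smul_smul, mul_inv_cancel₀ (norm_ne_zero_iff.2 hx), one_smul]
      _ ≤ ‖x‖ ^ 2 * f x₀ := by gcongr
      _ = -(-f x₀) * ‖x‖ ^ 2 := by ring

lemma ReNegDef.exists_pos_le_neg_mul_sum_sq {g : ℕ} {τ : Matrix (Fin g) (Fin g) ℂ}
    (hneg : ReNegDef τ) :
    ∃ c > 0, ∀ x : Fin g → ℝ, ∑ i, ∑ j, (τ i j).re * x i * x j ≤ -c * ∑ i, x i ^ 2 := by
  obtain ⟨c, hc, hle⟩ := exists_pos_le_neg_mul_norm_sq (E := EuclideanSpace ℝ (Fin g))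
    (f := fun x => ∑ i, ∑ j, (τ i j).re * x i * x j) (by fun_prop)
    (fun t x => by
      simp only [PiLp.smul_apply, smul_eq_mul, mul_sum]
      exact sum_congr rfl fun i _ => sum_congr rfl fun j _ => by ring)
    (fun x hx => hneg x (by simpa using hx))
  refine ⟨c, hc, fun x => ?_⟩
  simpa [EuclideanSpace.norm_sq_eq] using hle (WithLp.toLp 2 x)

lemma re_four_mul_thetaQ_add {g : ℕ} (τ : Matrix (Fin g) (Fin g) ℂ) (x : Fin g → ℝ)
    (z : Fin g → ℂ) :
    (4 * thetaQ τ (fun i => (x i : ℂ)) + 2 * ∑ i, (x i : ℂ) * z i).re =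
      ∑ i, ∑ j, (τ i j).re * x i * x j + 2 * ∑ i, x i * (z i).re := by
  simp [thetaQ, Complex.re_sum, Complex.mul_re]

theorem stmt2_general {g : ℕ} (τ : Matrix (Fin g) (Fin g) ℂ)
    (hneg : ReNegDef τ) (z : Fin g → ℂ) :
    Summable (fun m : Fin g → ℤ =>
      Complex.exp (4 * thetaQ τ (fun i => (m i : ℂ)) + 2 * ∑ i, (m i : ℂ) * z i)) := by
  obtain ⟨c, hc, hquad⟩ := hneg.exists_pos_le_neg_mul_sum_sq
  have hdom := summable_pi_prod_of_nonneg
    (fun i => summable_exp_neg_mul_sq_add_mul_abs hc (2 * |(z i).re|)) fun _ _ => (exp_pos _).le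
  refine hdom.of_norm_bounded fun m => ?_
  have hlin : 2 * ∑ i, (m i : ℝ) * (z i).re ≤ ∑ i, 2 * |(z i).re| * |(m i : ℝ)| := by
    rw [mul_sum]
    exact sum_le_sum fun i _ => by
      nlinarith [abs_mul (m i : ℝ) (z i).re, le_abs_self ((m i : ℝ) * (z i).re)]
  have hre := re_four_mul_thetaQ_add τ (fun i => (m i : ℝ)) z
  simp only [Complex.ofReal_intCast] at hre
  rw [Complex.norm_exp, ← exp_sum, exp_le_exp, hre, sum_add_distrib, ← mul_sum]
  linarith [hquad fun i => (m i : ℝ)]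

theorem stmt2 {g : ℕ} (τ : Matrix (Fin g) (Fin g) ℂ) (hsym : τ.IsSymm)
    (hneg : ReNegDef τ) (z : Fin g → ℂ) :
    Summable (fun m : Fin g → ℤ =>
      Complex.exp (4 * thetaQ τ (fun i => (m i : ℂ)) + 2 * ∑ i, (m i : ℂ) * z i)) :=
  stmt2_general τ hneg z
end
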